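/- Let p be an odd prime and let v ∈ ℚ_p be a p-adic unit that is not a square in ℚ_p, and let A = diag(1, -v, p). Then the set SO(3)_p = {L ∈ M₃(ℚ_p) : LᵀAL = A and det L = 1} is a compact subset of the space of 3×3 matrices over ℚ_p (with the topology induced by the p-adic absolute value on each entry). -/

import Mathlib

/-!
Since `v` is a non-square unit and `p` is odd, Hensel's lemma shows that `a² - v b²` has norm
`max ‖a‖² ‖b‖²`, an even power of `p`, while `‖p c²‖` is an odd power of `p`. The ultrametric
inequality is therefore an equality for `Q(x) = x₀² - v x₁² + p x₂²`, giving `‖Q(x)‖ ≥ ‖xᵢ‖² / p`.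
Each column `x` of `L ∈ SO(3)_p` satisfies `Q(x) = A_jj`, a p-adic integer, so all entries of `L`
have norm at most `√p`. Thus `SO(3)_p` is a closed subset of a compact box.
-/

open Matrix

namespace Matrix

theorem transpose_mul_diagonal_mul_apply_self {m n R : Type*} [Fintype m] [DecidableEq m]
    [CommSemiring R] (L : Matrix m n R) (d : m → R) (j : n) :
    (Lᵀ * diagonal d * L) j j = ∑ i, d i * L i j ^ 2 := by
  rw [mul_apply]
  simp only [mul_diagonal, transpose_apply]
  exact Finset.sum_congr rfl fun i _ => by ring

theorem isCompact_setOf_forall_norm_le {m n K : Type*} [SeminormedAddCommGroup K]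
    [ProperSpace K] (r : ℝ) : IsCompact {L : Matrix m n K | ∀ i j, ‖L i j‖ ≤ r} := by
  have h := isCompact_univ_pi fun _ : m => isCompact_univ_pi fun _ : n =>
    isCompact_closedBall (0 : K) r
  simp only [Set.pi, Set.mem_univ, Metric.mem_closedBall, dist_zero_right, forall_const] at h
  exact h

end Matrix

namespace PadicInt

variable {p : ℕ} [Fact p.Prime]

theorem norm_two_eq_one (hp : p ≠ 2) : ‖(2 : ℤ_[p])‖ = 1 := by
  simpa using (norm_natCast_eq_one_iff (p := p) (n := 2)).mpr
    ((Nat.coprime_primes Fact.out Nat.prime_two).mpr hp)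

theorem isSquare_of_norm_sq_sub_lt_one (hp : p ≠ 2) {c v : ℤ_[p]} (hc : ‖c‖ = 1)
    (h : ‖c ^ 2 - v‖ < 1) : IsSquare v := by
  open Polynomial in
  obtain ⟨z, hz, -⟩ := hensels_lemma (F := X ^ 2 - C v) (a := c)
    (by simpa [one_add_one_eq_two, norm_two_eq_one hp, hc] using h)
  exact ⟨z, by simpa [sub_eq_zero, sq, eq_comm] using hz⟩

end PadicInt

namespace Padic

variable {p : ℕ} [Fact p.Prime]

theorem isSquare_of_norm_sq_sub_lt_one (hp : p ≠ 2) {c v : ℚ_[p]} (hc : ‖c‖ = 1)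
    (hv : ‖v‖ ≤ 1) (h : ‖c ^ 2 - v‖ < 1) : IsSquare v := by
  obtain ⟨z, hz⟩ := PadicInt.isSquare_of_norm_sq_sub_lt_one (c := ⟨c, hc.le⟩) (v := ⟨v, hv⟩)
    hp hc h
  exact ⟨z, by simpa using congrArg ((↑) : ℤ_[p] → ℚ_[p]) hz⟩

theorem norm_sq_sub_mul_sq (hp : p ≠ 2) {v : ℚ_[p]} (hv : ‖v‖ = 1) (hvsq : ¬IsSquare v)
    (a b : ℚ_[p]) : ‖a ^ 2 - v * b ^ 2‖ = max (‖a‖ ^ 2) (‖b‖ ^ 2) := by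
  have hvb : ‖v * b ^ 2‖ = ‖b‖ ^ 2 := by rw [norm_mul, hv, one_mul, norm_pow]
  rcases eq_or_ne ‖a‖ ‖b‖ with hab | hab
  · rcases eq_or_ne b 0 with rfl | hb
    · simp_all
    have hle : ‖a ^ 2 - v * b ^ 2‖ ≤ ‖b‖ ^ 2 := by
      rw [sub_eq_add_neg]
      exact (nonarchimedean _ _).trans_eq (by rw [norm_neg, hvb, norm_pow, hab, max_self])
    rw [hab, max_self]
    refine hle.antisymm (not_lt.mp fun hlt => hvsq ?_)
    refine isSquare_of_norm_sq_sub_lt_one hp (c := a / b) ?_ hv.le ?_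
    · rw [norm_div, hab, div_self (norm_ne_zero_iff.mpr hb)]
    · have : (a / b) ^ 2 - v = (a ^ 2 - v * b ^ 2) / b ^ 2 := by field_simp
      rwa [this, norm_div, norm_pow, div_lt_one (by positivity)]
  · have hne : ‖a ^ 2‖ ≠ ‖-(v * b ^ 2)‖ := by
      rwa [norm_neg, hvb, norm_pow, Ne, pow_left_inj₀ (norm_nonneg _) (norm_nonneg _) two_ne_zero]
    rw [sub_eq_add_neg, add_eq_max_of_ne hne, norm_neg, hvb, norm_pow]

theorem norm_sq_ne_inv_p_mul_norm_sq (x : ℚ_[p]) {y : ℚ_[p]} (hy : y ≠ 0) :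
    ‖x‖ ^ 2 ≠ (p : ℝ)⁻¹ * ‖y‖ ^ 2 := by
  have hp : (p : ℚ_[p]) ≠ 0 := Nat.cast_ne_zero.mpr (Fact.out : p.Prime).ne_zero
  rcases eq_or_ne x 0 with rfl | hx
  · simpa [eq_comm, (Fact.out : p.Prime).ne_zero] using hy
  have hpy : (p : ℚ_[p]) * y ^ 2 ≠ 0 := mul_ne_zero hp (pow_ne_zero 2 hy)
  rw [← norm_p, ← norm_pow, ← norm_pow, ← norm_mul, norm_eq_zpow_neg_valuation (pow_ne_zero 2 hx),
    norm_eq_zpow_neg_valuation hpy, Ne, zpow_right_inj₀ (by exact_mod_cast (Fact.out : p.Prime).pos)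
      (by exact_mod_cast (Fact.out : p.Prime).ne_one),
    valuation_mul hp (pow_ne_zero 2 hy), valuation_p, valuation_pow, valuation_pow]
  omega

theorem inv_p_mul_norm_sq_le_norm_sq_sub_mul_sq_add_p_mul_sq (hp : p ≠ 2) {v : ℚ_[p]}
    (hv : ‖v‖ = 1) (hvsq : ¬IsSquare v) (x : Fin 3 → ℚ_[p]) (i : Fin 3) :
    (p : ℝ)⁻¹ * ‖x i‖ ^ 2 ≤ ‖x 0 ^ 2 - v * x 1 ^ 2 + p * x 2 ^ 2‖ := by
  have hbin := norm_sq_sub_mul_sq hp hv hvsq (x 0) (x 1)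
  have hlast : ‖(p : ℚ_[p]) * x 2 ^ 2‖ = (p : ℝ)⁻¹ * ‖x 2‖ ^ 2 := by
    rw [norm_mul, norm_p, norm_pow]
  have hQ : ‖x 0 ^ 2 - v * x 1 ^ 2 + p * x 2 ^ 2‖ =
      max (max (‖x 0‖ ^ 2) (‖x 1‖ ^ 2)) ((p : ℝ)⁻¹ * ‖x 2‖ ^ 2) := by
    rcases eq_or_ne (x 2) 0 with h2 | h2
    · simp [h2, hbin]
    rw [← hbin, ← hlast]
    refine add_eq_max_of_ne ?_
    rw [hbin, hlast]
    rcases max_choice (‖x 0‖ ^ 2) (‖x 1‖ ^ 2) with h | h <;> rw [h]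
    all_goals exact norm_sq_ne_inv_p_mul_norm_sq _ h2
  have hp_inv : (p : ℝ)⁻¹ ≤ 1 :=
    inv_le_one_of_one_le₀ (by exact_mod_cast (Fact.out : p.Prime).one_le)
  have hdrop (a : ℝ) : (p : ℝ)⁻¹ * a ^ 2 ≤ a ^ 2 := mul_le_of_le_one_left (sq_nonneg a) hp_inv
  rw [hQ]
  fin_cases i
  · exact (hdrop _).trans ((le_max_left _ _).trans (le_max_left _ _))
  · exact (hdrop _).trans ((le_max_right _ _).trans (le_max_left _ _))
  · exact le_max_right _ _

end Padic

/-- For an odd prime `p` and a p-adic unit `v` that is not a square,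
the group `SO(3)_p = {L : Lᵀ A L = A, det L = 1}` with `A = diag(1, -v, p)` is a
compact subset of the space of 3×3 matrices over `ℚ_p`. -/
theorem so3p_isCompact
    (p : ℕ) [Fact p.Prime] (hp : p ≠ 2)
    (v : ℚ_[p]) (hv : ‖v‖ = 1) (hvsq : ¬ IsSquare v)
    (A : Matrix (Fin 3) (Fin 3) ℚ_[p])
    (hA : A = Matrix.diagonal ![1, -v, (p : ℚ_[p])]) :
    IsCompact {L : Matrix (Fin 3) (Fin 3) ℚ_[p] | Lᵀ * A * L = A ∧ L.det = 1} := by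
  subst hA
  refine (isCompact_setOf_forall_norm_le √p).of_isClosed_subset
    ((isClosed_eq (by fun_prop) continuous_const).inter (isClosed_eq (by fun_prop) continuous_const))
    ?_
  rintro L ⟨hL, -⟩ i j
  have hcol : L 0 j ^ 2 - v * L 1 j ^ 2 + p * L 2 j ^ 2 = ![1, -v, (p : ℚ_[p])] j := by
    have := congr_fun₂ hL j j
    rw [transpose_mul_diagonal_mul_apply_self, Fin.sum_univ_three, diagonal_apply_eq] at this
    simp only [cons_val_zero, cons_val_one, cons_val] at this
    linear_combination this
  have hdiag : ‖![1, -v, (p : ℚ_[p])] j‖ ≤ 1 := by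
    fin_cases j
    · simp
    · simp [hv]
    · exact Padic.norm_p_lt_one.le
  have hbound := Padic.inv_p_mul_norm_sq_le_norm_sq_sub_mul_sq_add_p_mul_sq hp hv hvsq (L · j) i
  rw [hcol] at hbound
  exact Real.le_sqrt_of_sq_le <| by
    simpa using (inv_mul_le_iff₀ (Nat.cast_pos.mpr (Fact.out : p.Prime).pos)).mp
      (hbound.trans hdiag)
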